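/- Let S_n be subdivisions and S a strict subdivision (s_k < s_{k+1} for all k < |S|) with |S| = +∞, and let f_n ∈ D, ζ = (ζ_k)_{k≥1} ∈ D^∞ where each ζ_k is an excursion. Define E^S(f) = (e_k^S(f))_{k≥1} with e_k^S(f)(t) = f(t + s_{2k−1}) for 0 ≤ t < s_{2k} − s_{2k−1} and a otherwise, and Ψ^S(ζ)(t) = ζ_{k+1}(t − s_{2k+1}) if t ∈ [s_{2k+1}, s_{2k+2}) for some k, and a otherwise. If S_n → S pointwise and E^{S_n}(f_n) → ζ componentwise in the J1 topology, then Φ^{S_n}(f_n) → Ψ^S(ζ) in the J1 topology. -/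

import Mathlib

open scoped NNReal ENNReal Topology
open Filter Set

noncomputable section

/-- A càdlàg function `[0,∞) → V`: right-continuous with left limits
(at every positive time). -/
def Cadlag {V : Type*} [PseudoMetricSpace V] (f : ℝ≥0 → V) : Prop :=
  (∀ t : ℝ≥0, ContinuousWithinAt f (Set.Ici t) t) ∧
  ∀ t : ℝ≥0, 0 < t → ∃ l : V, Filter.Tendsto f (nhdsWithin t (Set.Iio t)) (nhds l)

/-- A time change: an increasing bijection of `[0,∞)`. -/
def IsTimeChange (l : ℝ≥0 → ℝ≥0) : Prop := StrictMono l ∧ Function.Bijective l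

/-- Convergence in the Skorokhod J1 topology, along a filter `F`: there are
time changes `l i` with `‖l i − Id‖_∞ → 0` and uniform convergence of
`f i ∘ l i` to `g` on `[0,m]` for every `m` in some unbounded set. -/
def J1Tendsto {V : Type*} [PseudoMetricSpace V] {ι : Type*} (F : Filter ι)
    (f : ι → ℝ≥0 → V) (g : ℝ≥0 → V) : Prop :=
  ∃ l : ι → ℝ≥0 → ℝ≥0, (∀ i, IsTimeChange (l i)) ∧
    Filter.Tendsto (fun i => ⨆ s : ℝ≥0, edist (l i s) s) F (nhds 0) ∧
    ∃ M : Set ℝ≥0, (∀ r : ℝ≥0, ∃ m ∈ M, r ≤ m) ∧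
      ∀ m ∈ M, Filter.Tendsto
        (fun i => ⨆ s : Set.Icc (0:ℝ≥0) m, edist (f i (l i (s:ℝ≥0))) (g (s:ℝ≥0)))
        F (nhds 0)

/-- First hitting time of `a` : `T(f) = inf{t > 0 : f t = a} ∈ [0,∞]`. -/
def hitTime {V : Type*} [PseudoMetricSpace V] (a : V) (f : ℝ≥0 → V) : ℝ≥0∞ :=
  sInf ((fun t : ℝ≥0 => (t : ℝ≥0∞)) '' {t : ℝ≥0 | 0 < t ∧ f t = a})

/-- An excursion: a càdlàg path which sticks at `a` from its first hitting
time of `a` on. -/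
def IsExcursion {V : Type*} [PseudoMetricSpace V] (a : V) (f : ℝ≥0 → V) : Prop :=
  Cadlag f ∧ ∀ t : ℝ≥0, hitTime a f ≤ (t : ℝ≥0∞) → f t = a

end

noncomputable section

/-- A subdivision of `[0,∞)`: a nondecreasing `[0,∞]`-valued sequence whose
half-open intervals `[s_k, s_{k+1})` cover `[0,∞)`. -/
def IsSubdivision (S : ℕ → ℝ≥0∞) : Prop :=
  Monotone S ∧ ∀ t : ℝ≥0, ∃ k : ℕ, S k ≤ (t : ℝ≥0∞) ∧ (t : ℝ≥0∞) < S (k + 1)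

open Classical in
/-- The truncation operator `Φ^S`: keep `f` on the even intervals
`[s_{2k+1}, s_{2k+2})`, truncate to `a` elsewhere. -/
def PhiSub {V : Type*} (a : V) (S : ℕ → ℝ≥0∞) (f : ℝ≥0 → V) : ℝ≥0 → V :=
  fun t => if ∃ k : ℕ, S (2*k+1) ≤ (t : ℝ≥0∞) ∧ (t : ℝ≥0∞) < S (2*k+2) then f t else a

end

noncomputable section

open Classical in
/-- The patching operator `Ψ^S`: place the path `ζ_{k+1}` on the interval
`[s_{2k+1}, s_{2k+2})`, and put `a` elsewhere. -/
def PsiSub {V : Type*} (a : V) (S : ℕ → ℝ≥0∞) (Z : ℕ → ℝ≥0 → V) : ℝ≥0 → V :=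
  fun t =>
    if h : ∃ k : ℕ, S (2*k+1) ≤ (t : ℝ≥0∞) ∧ (t : ℝ≥0∞) < S (2*k+2) then
      Z (h.choose + 1) (t - (S (2*h.choose+1)).toNNReal)
    else a

open Classical in
/-- The decomposition operator `E^S`: `e_k^S(f)(t) = f(t + s_{2k−1})` for
`t < s_{2k} − s_{2k−1}`, and `a` otherwise (`k ≥ 1`). -/
def ESub {V : Type*} (a : V) (S : ℕ → ℝ≥0∞) (f : ℝ≥0 → V) : ℕ → ℝ≥0 → V :=
  fun k t =>
    if (t : ℝ≥0∞) < S (2*k) - S (2*k-1) then f (t + (S (2*k-1)).toNNReal) else a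

/-!
For every `k`, the convergence `e_k(f_n) → ζ_k` provides time changes `λ_k^n → id` with
`e_k(f_n) ∘ λ_k^n → ζ_k` locally uniformly. A global time change is glued along `S`: on the
excursion interval `[s_{2k-1}, s_{2k})` it is `t ↦ s^n_{2k-1} + λ_k^n (t - s_{2k-1})`, on the gap
`[s_{2k}, s_{2k+1}]` it is affine and ends at `s^n_{2k+1}`. On an excursion interval,
`Φ^{S_n}(f_n)` after the time change is `e_k(f_n) ∘ λ_k^n` and `Ψ^S(ζ)` is `ζ_k`. On a gap,
`Ψ^S(ζ) = a`, while `Φ^{S_n}(f_n)` is `a` or a value of `e_k(f_n) ∘ λ_k^n` at a time `v` after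
`s_{2k} - s_{2k-1}`, hence close to `ζ_k v = a`: as a J1 limit of paths stopped at times tending
to `s_{2k} - s_{2k-1}`, the excursion `ζ_k` has hit `a` by then. For each `n` only finitely many
excursions can be matched, and their number tends to infinity along a diagonal.
-/

lemma NNReal.edist_add_add_le (a₁ a₂ b₁ b₂ : ℝ≥0) :
    edist (a₁ + a₂) (b₁ + b₂) ≤ edist a₁ b₁ + edist a₂ b₂ := by
  have := _root_.edist_add_add_le (a₁ : ℝ) a₂ b₁ b₂
  rwa [← NNReal.coe_add, ← NNReal.coe_add] at this

lemma NNReal.edist_tsub_tsub_le {a₁ a₂ b₁ b₂ : ℝ≥0} (ha : a₂ ≤ a₁) (hb : b₂ ≤ b₁) :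
    edist (a₁ - a₂) (b₁ - b₂) ≤ edist a₁ b₁ + edist a₂ b₂ := by
  have := _root_.edist_add_add_le (a₁ : ℝ) (-a₂) b₁ (-b₂)
  rw [edist_neg_neg, ← sub_eq_add_neg, ← sub_eq_add_neg] at this
  rwa [← NNReal.coe_sub ha, ← NNReal.coe_sub hb] at this

lemma NNReal.edist_mul_self_le {r u ℓ : ℝ≥0} (hu : u ≤ ℓ) :
    edist (r * u) u ≤ edist (r * ℓ) ℓ := by
  rw [edist_dist, edist_dist, NNReal.dist_eq, NNReal.dist_eq]
  refine ENNReal.ofReal_le_ofReal ?_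
  have key : ∀ x : ℝ≥0, |(↑(r * x) : ℝ) - x| = |(r : ℝ) - 1| * x := fun x => by
    rw [NNReal.coe_mul, ← sub_one_mul, abs_mul, NNReal.abs_eq]
  rw [key, key]
  exact mul_le_mul_of_nonneg_left (by exact_mod_cast hu) (abs_nonneg _)

namespace Skorokhod

lemma _root_.IsSubdivision.map_zero {S : ℕ → ℝ≥0∞} (hS : IsSubdivision S) : S 0 = 0 := by
  obtain ⟨k, hk, -⟩ := hS.2 0
  exact le_antisymm ((hS.1 (Nat.zero_le k)).trans (by simpa using hk)) zero_le

lemma monotone_of_forall_eq_coe {S : ℕ → ℝ≥0∞} {σ : ℕ → ℝ≥0} (hσ : Monotone σ)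
    (hSσ : ∀ j, S j = σ j) : Monotone S := fun i j h => by
  rw [hSσ, hSσ]; exact ENNReal.coe_le_coe.2 (hσ h)

lemma _root_.IsSubdivision.tendsto_toNNReal {S : ℕ → ℝ≥0∞} (hS : IsSubdivision S)
    (hfin : ∀ j, S j ≠ ⊤) : Tendsto (fun j => (S j).toNNReal) atTop atTop :=
  tendsto_atTop_atTop_of_monotone (fun i j h => ENNReal.toNNReal_mono (hfin j) (hS.1 h)) fun t => by
    obtain ⟨k, -, hk⟩ := hS.2 t
    exact ⟨k + 1, by simpa using ENNReal.toNNReal_mono (hfin (k + 1)) hk.le⟩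

lemma _root_.IsTimeChange.map_zero {l : ℝ≥0 → ℝ≥0} (hl : IsTimeChange l) : l 0 = 0 := by
  obtain ⟨x, hx⟩ := hl.2.2 0
  exact le_antisymm ((hl.1.monotone (zero_le : (0 : ℝ≥0) ≤ x)).trans hx.le) zero_le

lemma isTimeChange_id : IsTimeChange id := ⟨strictMono_id, Function.bijective_id⟩

lemma isTimeChange_const_mul {r : ℝ≥0} (hr : 0 < r) : IsTimeChange (r * ·) :=
  ⟨fun _ _ h => mul_lt_mul_of_pos_left h hr, (OrderIso.mulLeft₀ r hr).bijective⟩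

lemma tendsto_apply_of_tendsto_iSup_edist {ι : Type*} {F : Filter ι} {l : ι → ℝ≥0 → ℝ≥0}
    (hl : Tendsto (fun i => ⨆ s, edist (l i s) s) F (𝓝 0)) (s : ℝ≥0) :
    Tendsto (fun i => l i s) F (𝓝 s) :=
  tendsto_iff_edist_tendsto_0.2 <| tendsto_of_tendsto_of_tendsto_of_le_of_le tendsto_const_nhds hl
    (fun _ => zero_le) (fun i => le_iSup (fun s => edist (l i s) s) s)

lemma exists_mem_Ico_of_forall_lt {a : ℕ → ℝ≥0} (h0 : a 0 = 0) (ha : ∀ t, ∃ i, t < a i)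
    (t : ℝ≥0) : ∃ i, t ∈ Ico (a i) (a (i + 1)) := by
  obtain ⟨N, hN⟩ := ha t
  obtain ⟨i, -, hi⟩ := mem_iUnion₂.1 (Ico_subset_biUnion_Ico N a ⟨h0 ▸ zero_le, hN⟩)
  exact ⟨i, hi⟩

lemma exists_tendsto_atTop_eventually {P : ℕ → ℕ → Prop} (h : ∀ K, ∀ᶠ n in atTop, P K n) :
    ∃ K : ℕ → ℕ, Tendsto K atTop atTop ∧ ∀ᶠ n in atTop, P (K n) n := by
  classical
  choose N hN using fun K => eventually_atTop.1 (h K)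
  -- `A K` is a common threshold for all `K' ≤ K`; `K n` is the largest `K ≤ n` it allows.
  set A : ℕ → ℕ := fun K => (Finset.range (K + 1)).sup N
  have hNA : ∀ K, N K ≤ A K := fun K => Finset.le_sup (Finset.self_mem_range_succ K)
  refine ⟨fun n => Nat.findGreatest (fun K => A K ≤ n) n, tendsto_atTop_atTop.2 fun J =>
    ⟨max (A J) J, fun n hn => Nat.le_findGreatest (le_of_max_le_right hn) (le_of_max_le_left hn)⟩,
    eventually_atTop.2 ⟨A 0, fun n hn => hN _ _ ?_⟩⟩
  exact (hNA _).trans (Nat.findGreatest_spec (P := fun K => A K ≤ n) (Nat.zero_le n) hn)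

section J1

variable {V : Type*}

lemma j1Tendsto_const [PseudoMetricSpace V] {ι : Type*} (F : Filter ι) (g : ℝ≥0 → V) :
    J1Tendsto F (fun _ => g) g :=
  ⟨fun _ => id, fun _ => isTimeChange_id, by simpa using tendsto_const_nhds,
    univ, fun r => ⟨r, mem_univ r, le_rfl⟩, fun m _ => by simpa using tendsto_const_nhds⟩

theorem j1Tendsto_of_forall_eventually [PseudoMetricSpace V] {g : ℕ → ℝ≥0 → V} {h : ℝ≥0 → V}
    {m : ℕ → ℝ≥0} (hm : Tendsto m atTop atTop) {e : ℕ → ℕ → ℝ≥0∞}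
    (he : ∀ J, Tendsto (e J) atTop (𝓝 0))
    (H : ∀ K, ∀ᶠ n in atTop, ∃ L, IsTimeChange L ∧
      (∀ t, edist (L t) t ≤ ((K + 1 : ℕ) : ℝ≥0∞)⁻¹) ∧
      ∀ J < K, ∀ s ≤ m J, edist (g n (L s)) (h s) ≤ e J n) :
    J1Tendsto atTop g h := by
  obtain ⟨K, hK, hP⟩ := exists_tendsto_atTop_eventually H
  obtain ⟨N, hN⟩ := eventually_atTop.1 hP
  have hex : ∀ n, ∃ L, IsTimeChange L ∧ (N ≤ n →
      (∀ t, edist (L t) t ≤ ((K n + 1 : ℕ) : ℝ≥0∞)⁻¹) ∧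
      ∀ J < K n, ∀ s ≤ m J, edist (g n (L s)) (h s) ≤ e J n) := fun n => by
    by_cases hn : N ≤ n
    · obtain ⟨L, hL, hLK⟩ := hN n hn
      exact ⟨L, hL, fun _ => hLK⟩
    · exact ⟨id, isTimeChange_id, fun h => absurd h hn⟩
  choose L hL hLK using hex
  refine ⟨L, hL, ?_, range m, fun r => ?_, ?_⟩
  · refine tendsto_of_tendsto_of_tendsto_of_le_of_le' tendsto_const_nhds
      (ENNReal.tendsto_inv_nat_nhds_zero.comp ((tendsto_add_atTop_nat 1).comp hK))
      (Eventually.of_forall fun _ => zero_le) ?_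
    filter_upwards [eventually_ge_atTop N] with n hn
    exact iSup_le (hLK n hn).1
  · obtain ⟨J, hJ⟩ := (hm.eventually_ge_atTop r).exists
    exact ⟨m J, mem_range_self J, hJ⟩
  · rintro _ ⟨J, rfl⟩
    refine tendsto_of_tendsto_of_tendsto_of_le_of_le' tendsto_const_nhds (he J)
      (Eventually.of_forall fun _ => zero_le) ?_
    filter_upwards [eventually_ge_atTop N, hK.eventually_gt_atTop J] with n hn hJ
    exact iSup_le fun s => (hLK n hn).2 J hJ s s.2.2

lemma _root_.J1Tendsto.eq_of_lt [MetricSpace V] {a : V} {ι : Type*} {F : Filter ι} [F.NeBot]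
    {g : ι → ℝ≥0 → V} {h : ℝ≥0 → V} (hg : J1Tendsto F g h) {D : ι → ℝ≥0∞} {d : ℝ≥0}
    (hD : Tendsto D F (𝓝 d)) (hstop : ∀ i (t : ℝ≥0), D i ≤ t → g i t = a) {v : ℝ≥0} (hv : d < v) :
    h v = a := by
  obtain ⟨l, -, hl, M, hM, hconv⟩ := hg
  obtain ⟨m, hmM, hvm⟩ := hM v
  obtain ⟨w, hdw, hwv⟩ := exists_between hv
  have hto : Tendsto (fun i => edist (g i (l i v)) (h v)) F (𝓝 0) :=
    tendsto_of_tendsto_of_tendsto_of_le_of_le tendsto_const_nhds (hconv m hmM)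
      (fun _ => zero_le) fun i => le_iSup (fun s : Icc (0 : ℝ≥0) m =>
        edist (g i (l i s)) (h s)) ⟨v, zero_le, hvm⟩
  have hev : ∀ᶠ i in F, edist (g i (l i v)) (h v) = edist a (h v) := by
    filter_upwards [hD.eventually_lt_const (ENNReal.coe_lt_coe.2 hdw),
      (tendsto_apply_of_tendsto_iSup_edist hl v).eventually_const_lt hwv] with i hDi hwi
    rw [hstop i _ (hDi.trans (ENNReal.coe_lt_coe.2 hwi)).le]
  exact (edist_eq_zero.1 (tendsto_nhds_unique
    (tendsto_const_nhds.congr' (hev.mono fun _ h => h.symm)) hto)).symm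

lemma _root_.IsExcursion.eq_of_le [PseudoMetricSpace V] {a : V} {f : ℝ≥0 → V} (hf : IsExcursion a f)
    {d : ℝ≥0} (h : ∀ v, d < v → f v = a) {v : ℝ≥0} (hv : d ≤ v) : f v = a := by
  refine hf.2 v (le_trans ?_ (ENNReal.coe_le_coe.2 hv))
  refine ENNReal.le_of_forall_pos_le_add fun ε hε _ => sInf_le ⟨d + ε, ⟨?_, h _ ?_⟩, by simp⟩
  · exact add_pos_of_nonneg_of_pos zero_le hε
  · exact lt_add_of_pos_right d hε

end J1

section Glue

variable {b c : ℕ → ℝ≥0} {φ : ℕ → ℝ≥0 → ℝ≥0}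

open Classical in
noncomputable def glueTimeChange (b c : ℕ → ℝ≥0) (φ : ℕ → ℝ≥0 → ℝ≥0) (t : ℝ≥0) : ℝ≥0 :=
  if h : ∃ i, t < b (i + 1) then c (Nat.find h) + φ (Nat.find h) (t - b (Nat.find h)) else t

lemma glueTimeChange_apply (hb : Monotone b) {i : ℕ} {t : ℝ≥0} (ht : t ∈ Ico (b i) (b (i + 1))) :
    glueTimeChange b c φ t = c i + φ i (t - b i) := by
  have h : ∃ j, t < b (j + 1) := ⟨i, ht.2⟩
  have hi : Nat.find h = i :=
    (Nat.find_eq_iff h).2 ⟨ht.2, fun j hj => not_lt.2 ((hb (by omega)).trans ht.1)⟩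
  rw [glueTimeChange, dif_pos h, hi]

lemma edist_glueTimeChange_le (hb : Monotone b) (hb0 : b 0 = 0) (hbu : ∀ t, ∃ i, t < b i)
    {C₁ C₂ : ℝ≥0∞} (h₁ : ∀ i, edist (c i) (b i) ≤ C₁)
    (h₂ : ∀ i u, u < b (i + 1) - b i → edist (φ i u) u ≤ C₂) (t : ℝ≥0) :
    edist (glueTimeChange b c φ t) t ≤ C₁ + C₂ := by
  obtain ⟨i, ht⟩ := exists_mem_Ico_of_forall_lt hb0 hbu t
  rw [glueTimeChange_apply hb ht]
  calc edist (c i + φ i (t - b i)) t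
      = edist (c i + φ i (t - b i)) (b i + (t - b i)) := by rw [add_tsub_cancel_of_le ht.1]
    _ ≤ C₁ + C₂ := (NNReal.edist_add_add_le _ _ _ _).trans
        (add_le_add (h₁ i) (h₂ i _ (tsub_lt_tsub_right_of_le ht.1 ht.2)))

variable (hb : Monotone b) (hc : ∀ i, c (i + 1) = c i + φ i (b (i + 1) - b i))
  (hφ : ∀ i, IsTimeChange (φ i))
include hb hc hφ

lemma glueTimeChange_mem_Ico {i : ℕ} {t : ℝ≥0} (ht : t ∈ Ico (b i) (b (i + 1))) :
    glueTimeChange b c φ t ∈ Ico (c i) (c (i + 1)) := by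
  rw [glueTimeChange_apply hb ht, hc]
  exact ⟨le_self_add, add_lt_add_right ((hφ i).1 (tsub_lt_tsub_right_of_le ht.1 ht.2)) _⟩

lemma glueTimeChange_surjective (hc0 : c 0 = 0) (hcu : ∀ y, ∃ i, y < c i) :
    Function.Surjective (glueTimeChange b c φ) := by
  intro y
  obtain ⟨j, hy⟩ := exists_mem_Ico_of_forall_lt hc0 hcu y
  obtain ⟨x, hx⟩ := (hφ j).2.2 (y - c j)
  have hxb : x < b (j + 1) - b j := by
    rw [← (hφ j).1.lt_iff_lt, hx]
    exact tsub_lt_iff_left hy.1 |>.2 (hc j ▸ hy.2)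
  have hmem : b j + x ∈ Ico (b j) (b (j + 1)) :=
    ⟨le_self_add, lt_tsub_iff_left.1 hxb⟩
  refine ⟨b j + x, ?_⟩
  rw [glueTimeChange_apply hb hmem, add_tsub_cancel_left, hx, add_tsub_cancel_of_le hy.1]

variable (hb0 : b 0 = 0) (hbu : ∀ t, ∃ i, t < b i)
include hb0 hbu

lemma glueTimeChange_strictMono : StrictMono (glueTimeChange b c φ) := by
  have hcm : Monotone c := monotone_nat_of_le_succ fun i => (hc i).symm ▸ le_self_add
  intro s t hst
  obtain ⟨i, hs⟩ := exists_mem_Ico_of_forall_lt hb0 hbu s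
  obtain ⟨j, ht⟩ := exists_mem_Ico_of_forall_lt hb0 hbu t
  rcases lt_trichotomy i j with hij | rfl | hji
  · exact (glueTimeChange_mem_Ico hb hc hφ hs).2.trans_le
      ((hcm hij).trans (glueTimeChange_mem_Ico hb hc hφ ht).1)
  · rw [glueTimeChange_apply hb hs, glueTimeChange_apply hb ht]
    exact add_lt_add_right ((hφ i).1 (tsub_lt_tsub_right_of_le hs.1 hst)) _
  · exact absurd ((ht.2.trans_le (hb hji)).trans_le (hs.1.trans hst.le)) (lt_irrefl _)

theorem isTimeChange_glueTimeChange (hc0 : c 0 = 0) (hcu : ∀ y, ∃ i, y < c i) :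
    IsTimeChange (glueTimeChange b c φ) :=
  have hmono := glueTimeChange_strictMono hb hc hφ hb0 hbu
  ⟨hmono, hmono.injective, glueTimeChange_surjective hb hc hφ hc0 hcu⟩

end Glue

section Matching

variable {σ τ : ℕ → ℝ≥0} {l : ℕ → ℝ≥0 → ℝ≥0}

/-- Values at the breakpoints `σ j` of the time change carrying each excursion interval
`[σ (2k-1), σ (2k))` by `l k` onto an interval starting at `τ (2k-1)`, and each gap
`[σ (2k), σ (2k+1)]` affinely onto an interval ending at `τ (2k+1)`. For `k = 0`, `2k - 1 = 0`
in `ℕ`, so the `0`-th excursion interval is empty. -/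
noncomputable def matchTarget (σ τ : ℕ → ℝ≥0) (l : ℕ → ℝ≥0 → ℝ≥0) (j : ℕ) : ℝ≥0 :=
  if Even j then τ (j - 1) + l (j / 2) (σ j - σ (j - 1)) else τ j

noncomputable def matchPiece (σ τ : ℕ → ℝ≥0) (l : ℕ → ℝ≥0 → ℝ≥0) (j : ℕ) : ℝ≥0 → ℝ≥0 :=
  if Even j then
    fun u => (matchTarget σ τ l (j + 1) - matchTarget σ τ l j) / (σ (j + 1) - σ j) * u
  else l ((j + 1) / 2)

noncomputable def matchTimeChange (σ τ : ℕ → ℝ≥0) (l : ℕ → ℝ≥0 → ℝ≥0) : ℝ≥0 → ℝ≥0 :=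
  glueTimeChange σ (matchTarget σ τ l) (matchPiece σ τ l)

lemma matchTarget_two_mul (k : ℕ) :
    matchTarget σ τ l (2 * k) = τ (2 * k - 1) + l k (σ (2 * k) - σ (2 * k - 1)) := by
  simp [matchTarget]

lemma matchTarget_two_mul_add_one (k : ℕ) : matchTarget σ τ l (2 * k + 1) = τ (2 * k + 1) := by
  simp [matchTarget]

lemma matchPiece_two_mul_add_one (k : ℕ) : matchPiece σ τ l (2 * k + 1) = l (k + 1) := by
  simp [matchPiece, show (2 * k + 1 + 1) / 2 = k + 1 by omega]

lemma matchPiece_two_mul (k : ℕ) : matchPiece σ τ l (2 * k) = fun u =>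
    (τ (2 * k + 1) - matchTarget σ τ l (2 * k)) / (σ (2 * k + 1) - σ (2 * k)) * u := by
  simp [matchPiece, matchTarget_two_mul_add_one]

variable (hσ : StrictMono σ)
  (hfit : ∀ k, τ (2 * k - 1) + l k (σ (2 * k) - σ (2 * k - 1)) < τ (2 * k + 1))
include hσ hfit

lemma matchTarget_succ (j : ℕ) : matchTarget σ τ l (j + 1) =
    matchTarget σ τ l j + matchPiece σ τ l j (σ (j + 1) - σ j) := by
  obtain ⟨k, rfl | rfl⟩ := Nat.even_or_odd' j
  · have hΔ : σ (2 * k + 1) - σ (2 * k) ≠ 0 := (tsub_pos_of_lt (hσ (by omega))).ne'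
    rw [matchPiece_two_mul]
    beta_reduce
    rw [div_mul_cancel₀ _ hΔ, matchTarget_two_mul_add_one,
      add_tsub_cancel_of_le (matchTarget_two_mul (l := l) k ▸ hfit k).le]
  · rw [matchPiece_two_mul_add_one, matchTarget_two_mul_add_one,
      show 2 * k + 1 + 1 = 2 * (k + 1) by ring, matchTarget_two_mul,
      show 2 * (k + 1) - 1 = 2 * k + 1 by omega]

lemma isTimeChange_matchPiece (hl : ∀ k, IsTimeChange (l k)) (j : ℕ) :
    IsTimeChange (matchPiece σ τ l j) := by
  obtain ⟨k, rfl | rfl⟩ := Nat.even_or_odd' j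
  · rw [matchPiece_two_mul]
    exact isTimeChange_const_mul <| div_pos
      (tsub_pos_of_lt (matchTarget_two_mul (l := l) k ▸ hfit k)) (tsub_pos_of_lt (hσ (by omega)))
  · exact matchPiece_two_mul_add_one (σ := σ) (τ := τ) k ▸ hl (k + 1)

theorem isTimeChange_matchTimeChange (hl : ∀ k, IsTimeChange (l k)) (hσ0 : σ 0 = 0)
    (hσt : Tendsto σ atTop atTop) (hτ0 : τ 0 = 0) (hτt : Tendsto τ atTop atTop) :
    IsTimeChange (matchTimeChange σ τ l) := by
  refine isTimeChange_glueTimeChange hσ.monotone (matchTarget_succ hσ hfit)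
    (isTimeChange_matchPiece hσ hfit hl) hσ0 (fun t => (hσt.eventually_gt_atTop t).exists) ?_ ?_
  · simpa [hσ0, hτ0, IsTimeChange.map_zero (hl 0)] using
      matchTarget_two_mul (σ := σ) (τ := τ) (l := l) 0
  · intro y
    obtain ⟨N, hN⟩ := (hτt.eventually_gt_atTop y).exists_forall_of_atTop
    exact ⟨2 * N + 1, matchTarget_two_mul_add_one (σ := σ) (l := l) N ▸ hN _ (by omega)⟩

omit hfit in
lemma matchTimeChange_apply_of_mem {k : ℕ} {s : ℝ≥0}
    (hs : s ∈ Ico (σ (2 * k + 1)) (σ (2 * k + 2))) :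
    matchTimeChange σ τ l s = τ (2 * k + 1) + l (k + 1) (s - σ (2 * k + 1)) := by
  rw [matchTimeChange, glueTimeChange_apply hσ.monotone hs, matchTarget_two_mul_add_one,
    matchPiece_two_mul_add_one]

lemma matchTimeChange_lt_of_mem (hl : ∀ k, IsTimeChange (l k)) {k : ℕ} {s : ℝ≥0}
    (hs : s ∈ Ico (σ (2 * k + 1)) (σ (2 * k + 2))) : matchTimeChange σ τ l s < τ (2 * k + 3) := by
  have h := (glueTimeChange_mem_Ico hσ.monotone (matchTarget_succ hσ hfit)
    (isTimeChange_matchPiece hσ hfit hl) hs).2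
  rw [show 2 * k + 1 + 1 = 2 * (k + 1) by ring, matchTarget_two_mul] at h
  exact h.trans (hfit (k + 1))

lemma matchTimeChange_mem_of_mem (hl : ∀ k, IsTimeChange (l k)) {k : ℕ} {s : ℝ≥0}
    (hs : s ∈ Ico (σ (2 * k)) (σ (2 * k + 1))) : matchTimeChange σ τ l s ∈
      Ico (τ (2 * k - 1) + l k (σ (2 * k) - σ (2 * k - 1))) (τ (2 * k + 1)) := by
  have h := glueTimeChange_mem_Ico hσ.monotone (matchTarget_succ hσ hfit)
    (isTimeChange_matchPiece hσ hfit hl) hs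
  rwa [matchTarget_two_mul, matchTarget_two_mul_add_one] at h

omit hfit in
lemma edist_matchTarget_le {δ : ℝ≥0∞} (hτσ : ∀ j, edist (τ j) (σ j) ≤ δ)
    (hlδ : ∀ k u, edist (l k u) u ≤ δ) (j : ℕ) : edist (matchTarget σ τ l j) (σ j) ≤ 2 * δ := by
  obtain ⟨k, rfl | rfl⟩ := Nat.even_or_odd' j
  · rw [matchTarget_two_mul, two_mul δ]
    calc _ = edist (τ (2 * k - 1) + l k (σ (2 * k) - σ (2 * k - 1)))
          (σ (2 * k - 1) + (σ (2 * k) - σ (2 * k - 1))) := by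
          rw [add_tsub_cancel_of_le (hσ.monotone (by omega))]
      _ ≤ δ + δ := (NNReal.edist_add_add_le _ _ _ _).trans (add_le_add (hτσ _) (hlδ _ _))
  · rw [matchTarget_two_mul_add_one, two_mul δ]
    exact (hτσ _).trans le_self_add

lemma edist_matchPiece_le {δ : ℝ≥0∞} (hτσ : ∀ j, edist (τ j) (σ j) ≤ δ)
    (hlδ : ∀ k u, edist (l k u) u ≤ δ) {j : ℕ} {u : ℝ≥0} (hu : u < σ (j + 1) - σ j) :
    edist (matchPiece σ τ l j u) u ≤ 4 * δ := by
  obtain ⟨k, rfl | rfl⟩ := Nat.even_or_odd' j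
  · obtain ⟨r, hr⟩ : ∃ r, matchPiece σ τ l (2 * k) = (r * ·) := ⟨_, matchPiece_two_mul k⟩
    have hsucc := matchTarget_succ hσ hfit (2 * k)
    have hend : r * (σ (2 * k + 1) - σ (2 * k)) =
        matchTarget σ τ l (2 * k + 1) - matchTarget σ τ l (2 * k) := by
      rw [hsucc, hr, add_tsub_cancel_left]
    have hle : matchTarget σ τ l (2 * k) ≤ matchTarget σ τ l (2 * k + 1) := by
      rw [hsucc]; exact le_self_add
    rw [hr]
    calc edist (r * u) u ≤ edist (r * (σ (2 * k + 1) - σ (2 * k))) (σ (2 * k + 1) - σ (2 * k)) :=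
          NNReal.edist_mul_self_le hu.le
      _ ≤ 2 * δ + 2 * δ := hend ▸ (NNReal.edist_tsub_tsub_le hle (hσ.monotone (by omega))).trans
          (add_le_add (edist_matchTarget_le hσ hτσ hlδ _) (edist_matchTarget_le hσ hτσ hlδ _))
      _ = 4 * δ := by rw [← add_mul]; norm_num
  · rw [matchPiece_two_mul_add_one]
    exact (hlδ _ _).trans (le_mul_of_one_le_left' (by norm_num))

theorem edist_matchTimeChange_le (hσ0 : σ 0 = 0) (hσt : Tendsto σ atTop atTop) {δ : ℝ≥0∞}
    (hτσ : ∀ j, edist (τ j) (σ j) ≤ δ) (hlδ : ∀ k u, edist (l k u) u ≤ δ) (t : ℝ≥0) :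
    edist (matchTimeChange σ τ l t) t ≤ 6 * δ :=
  calc edist (matchTimeChange σ τ l t) t ≤ 2 * δ + 4 * δ :=
        edist_glueTimeChange_le hσ.monotone hσ0 (fun t => (hσt.eventually_gt_atTop t).exists)
          (edist_matchTarget_le hσ hτσ hlδ) (fun _ _ => edist_matchPiece_le hσ hfit hτσ hlδ) t
    _ = 6 * δ := by rw [← add_mul]; norm_num

end Matching

section Operators

variable {V : Type*} (a : V) {S : ℕ → ℝ≥0∞}

lemma eq_of_mem_excursion (hS : Monotone S) {j k : ℕ} {t : ℝ≥0∞}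
    (hj : S (2 * j + 1) ≤ t ∧ t < S (2 * j + 2)) (hk : S (2 * k + 1) ≤ t ∧ t < S (2 * k + 2)) :
    j = k := by
  by_contra hne
  rcases Nat.lt_or_gt_of_ne hne with h | h
  · exact (hj.2.trans_le ((hS (by omega : 2 * j + 2 ≤ 2 * k + 1)).trans hk.1)).false
  · exact (hk.2.trans_le ((hS (by omega : 2 * k + 2 ≤ 2 * j + 1)).trans hj.1)).false

lemma not_exists_mem_excursion (hS : Monotone S) {k : ℕ} {t : ℝ≥0∞} (h₁ : S (2 * k) ≤ t)
    (h₂ : t < S (2 * k + 1)) : ¬ ∃ j, S (2 * j + 1) ≤ t ∧ t < S (2 * j + 2) := by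
  rintro ⟨j, hj₁, hj₂⟩
  rcases Nat.lt_or_ge j k with h | h
  · exact (hj₂.trans_le ((hS (by omega : 2 * j + 2 ≤ 2 * k)).trans h₁)).false
  · exact (h₂.trans_le ((hS (by omega : 2 * k + 1 ≤ 2 * j + 1)).trans hj₁)).false

lemma phiSub_eq_of_mem_gap (hS : Monotone S) (f : ℝ≥0 → V) {k : ℕ} {t : ℝ≥0}
    (h₁ : S (2 * k) ≤ t) (h₂ : (t : ℝ≥0∞) < S (2 * k + 1)) : PhiSub a S f t = a :=
  if_neg (not_exists_mem_excursion hS h₁ h₂)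

lemma psiSub_eq_of_mem_gap (hS : Monotone S) (Z : ℕ → ℝ≥0 → V) {k : ℕ} {t : ℝ≥0}
    (h₁ : S (2 * k) ≤ t) (h₂ : (t : ℝ≥0∞) < S (2 * k + 1)) : PsiSub a S Z t = a :=
  dif_neg (not_exists_mem_excursion hS h₁ h₂)

lemma psiSub_add_eq (hS : Monotone S) (Z : ℕ → ℝ≥0 → V) {k : ℕ} {x u : ℝ≥0}
    (hx : S (2 * k + 1) = x) (hu : ((x + u : ℝ≥0) : ℝ≥0∞) < S (2 * k + 2)) :
    PsiSub a S Z (x + u) = Z (k + 1) u := by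
  have hlive : S (2 * k + 1) ≤ ((x + u : ℝ≥0) : ℝ≥0∞) ∧ ((x + u : ℝ≥0) : ℝ≥0∞) < S (2 * k + 2) :=
    ⟨hx ▸ ENNReal.coe_le_coe.2 le_self_add, hu⟩
  have h : ∃ j, S (2 * j + 1) ≤ ((x + u : ℝ≥0) : ℝ≥0∞) ∧ ((x + u : ℝ≥0) : ℝ≥0∞) < S (2 * j + 2) :=
    ⟨k, hlive⟩
  rw [PsiSub, dif_pos h, eq_of_mem_excursion hS h.choose_spec hlive, hx, ENNReal.toNNReal_coe,
    add_tsub_cancel_left]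

lemma phiSub_add_eq_eSub (hS : Monotone S) (f : ℝ≥0 → V) {k : ℕ} {x y : ℝ≥0}
    (hx : S (2 * k - 1) = x) (hy : ((x + y : ℝ≥0) : ℝ≥0∞) < S (2 * k + 1)) :
    PhiSub a S f (x + y) = ESub a S f k y := by
  simp only [ESub, hx, ENNReal.toNNReal_coe, lt_tsub_iff_left, ← ENNReal.coe_add, add_comm y]
  split_ifs with h
  · have hk : k ≠ 0 := by
      rintro rfl
      exact (h.trans_le (hx ▸ ENNReal.coe_le_coe.2 le_self_add)).false
    obtain ⟨j, rfl⟩ := Nat.exists_eq_succ_of_ne_zero hk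
    refine if_pos ⟨j, ?_, ?_⟩
    · rw [show 2 * j + 1 = 2 * (j + 1) - 1 by omega, hx]
      exact ENNReal.coe_le_coe.2 le_self_add
    · rwa [show 2 * j + 2 = 2 * (j + 1) by omega]
  · exact phiSub_eq_of_mem_gap a hS f (not_lt.1 h) hy

lemma eSub_eq_of_le (f : ℝ≥0 → V) {k : ℕ} {y : ℝ≥0} (hy : S (2 * k) - S (2 * k - 1) ≤ y) :
    ESub a S f k y = a :=
  if_neg (not_lt.2 hy)

lemma eSub_zero (f : ℝ≥0 → V) : ESub a S f 0 = fun _ => a :=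
  funext fun _ => eSub_eq_of_le a f (by simp)

lemma psiSub_update_zero (Z : ℕ → ℝ≥0 → V) (g : ℝ≥0 → V) :
    PsiSub a S (Function.update Z 0 g) = PsiSub a S Z := by
  funext t
  simp only [PsiSub]
  split_ifs
  · rw [Function.update_of_ne (Nat.succ_ne_zero _)]
  · rfl

end Operators

lemma _root_.IsExcursion.eq_of_j1Tendsto_eSub {V : Type*} [MetricSpace V] {a : V} {ζ : ℝ≥0 → V}
    (hζ : IsExcursion a ζ) {Sn : ℕ → ℕ → ℝ≥0∞} {f : ℕ → ℝ≥0 → V} {k : ℕ}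
    (hE : J1Tendsto atTop (fun n => ESub a (Sn n) (f n) k) ζ) {d : ℝ≥0}
    (hd : Tendsto (fun n => Sn n (2 * k) - Sn n (2 * k - 1)) atTop (𝓝 d)) {v : ℝ≥0} (hv : d ≤ v) :
    ζ v = a :=
  hζ.eq_of_le (fun _ hw => hE.eq_of_lt hd (fun n _ ht => eSub_eq_of_le a (f n) ht) hw) hv

section Estimate

variable {V : Type*} [PseudoMetricSpace V] (a : V)

lemma edist_le_of_stopped {E Z : ℝ≥0 → V} {l : ℝ≥0 → ℝ≥0} (hl : IsTimeChange l) {d d' : ℝ≥0}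
    {ε : ℝ≥0∞} (hE : ∀ y, d' ≤ y → E y = a) (hZ : ∀ v, d ≤ v → Z v = a)
    (happrox : ∀ v, l v < d' → edist (E (l v)) (Z v) ≤ ε) {y : ℝ≥0} (hy : l d ≤ y) :
    edist (E y) a ≤ ε := by
  by_cases h : y < d'
  · obtain ⟨v, rfl⟩ := hl.2.2 y
    rw [← hZ v (hl.1.le_iff_le.1 hy)]
    exact happrox v h
  · rw [hE y (not_lt.1 h), edist_self]
    exact zero_le

variable {S S' : ℕ → ℝ≥0∞} {σ τ : ℕ → ℝ≥0} {l : ℕ → ℝ≥0 → ℝ≥0} {f : ℝ≥0 → V}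
  {Z : ℕ → ℝ≥0 → V} {ε : ℝ≥0∞}
  (hSσ : ∀ j, S j = σ j) (hS' : Monotone S') (hσ : StrictMono σ)
  (hfit : ∀ k, τ (2 * k - 1) + l k (σ (2 * k) - σ (2 * k - 1)) < τ (2 * k + 1))
  (hl : ∀ k, IsTimeChange (l k))
include hSσ hS' hσ hfit hl

lemma edist_phiSub_psiSub_le_of_mem_excursion {k : ℕ} (hS'τ : ∀ j ≤ 2 * k + 3, S' j = τ j)
    (happrox : ∀ u ≤ σ (2 * k + 2) - σ (2 * k + 1),
      edist (ESub a S' f (k + 1) (l (k + 1) u)) (Z (k + 1) u) ≤ ε)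
    {s : ℝ≥0} (hs : s ∈ Ico (σ (2 * k + 1)) (σ (2 * k + 2))) :
    edist (PhiSub a S' f (matchTimeChange σ τ l s)) (PsiSub a S Z s) ≤ ε := by
  have hS := monotone_of_forall_eq_coe hσ.monotone hSσ
  have hlt := matchTimeChange_lt_of_mem hσ hfit hl hs
  obtain ⟨u, rfl⟩ : ∃ u, s = σ (2 * k + 1) + u := ⟨_, (add_tsub_cancel_of_le hs.1).symm⟩
  rw [matchTimeChange_apply_of_mem hσ hs, add_tsub_cancel_left] at hlt ⊢
  rw [phiSub_add_eq_eSub a hS' f (k := k + 1)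
      (by rw [show 2 * (k + 1) - 1 = 2 * k + 1 by omega]; exact hS'τ _ (by omega))
      (by rw [show 2 * (k + 1) + 1 = 2 * k + 3 by ring, hS'τ _ le_rfl]; exact_mod_cast hlt),
    psiSub_add_eq a hS Z (hSσ _) (hSσ _ ▸ ENNReal.coe_lt_coe.2 hs.2)]
  exact happrox u (le_tsub_of_add_le_left hs.2.le)

lemma edist_phiSub_psiSub_le_of_mem_gap {k : ℕ} (hS'τ : ∀ j ≤ 2 * k + 1, S' j = τ j)
    (hZ : ∀ v, σ (2 * k) - σ (2 * k - 1) ≤ v → Z k v = a)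
    (happrox : ∀ v, l k v < τ (2 * k) - τ (2 * k - 1) →
      edist (ESub a S' f k (l k v)) (Z k v) ≤ ε)
    {s : ℝ≥0} (hs : s ∈ Ico (σ (2 * k)) (σ (2 * k + 1))) :
    edist (PhiSub a S' f (matchTimeChange σ τ l s)) (PsiSub a S Z s) ≤ ε := by
  have hS := monotone_of_forall_eq_coe hσ.monotone hSσ
  rw [psiSub_eq_of_mem_gap a hS Z (k := k) (hSσ _ ▸ ENNReal.coe_le_coe.2 hs.1)
    (hSσ _ ▸ ENNReal.coe_lt_coe.2 hs.2)]
  have hmem := matchTimeChange_mem_of_mem hσ hfit hl hs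
  obtain ⟨y, hy⟩ : ∃ y, matchTimeChange σ τ l s = τ (2 * k - 1) + y :=
    ⟨_, (add_tsub_cancel_of_le (le_self_add.trans hmem.1)).symm⟩
  rw [hy] at hmem ⊢
  rw [phiSub_add_eq_eSub a hS' f (hS'τ _ (by omega)) (hS'τ _ le_rfl ▸ ENNReal.coe_lt_coe.2 hmem.2)]
  refine edist_le_of_stopped a (E := ESub a S' f k) (hl k) (fun y hy => eSub_eq_of_le a f ?_) hZ
    happrox (le_of_add_le_add_left hmem.1)
  rw [hS'τ _ (by omega), hS'τ _ (by omega), ← ENNReal.coe_sub]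
  exact ENNReal.coe_le_coe.2 hy

lemma edist_phiSub_psiSub_le (hσ0 : σ 0 = 0) {J : ℕ} (hS'τ : ∀ j ≤ 2 * J + 1, S' j = τ j)
    {m : ℕ → ℝ≥0} {e : ℕ → ℝ≥0∞} (hZ : ∀ k ≤ J, ∀ v, σ (2 * k) - σ (2 * k - 1) ≤ v → Z k v = a)
    (happrox : ∀ k ≤ J, ∀ u ≤ m k, edist (ESub a S' f k (l k u)) (Z k u) ≤ e k)
    (hmσ : ∀ k ≤ J, σ (2 * k) - σ (2 * k - 1) ≤ m k)
    (hmτ : ∀ k ≤ J, ∀ v, l k v < τ (2 * k) - τ (2 * k - 1) → v ≤ m k)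
    {s : ℝ≥0} (hs : s ≤ σ (2 * J)) :
    edist (PhiSub a S' f (matchTimeChange σ τ l s)) (PsiSub a S Z s) ≤
      ∑ k ∈ Finset.range (J + 1), e k := by
  obtain ⟨j, hj, hsj⟩ := mem_iUnion₂.1 <|
    Ico_subset_biUnion_Ico (2 * J + 1) σ ⟨hσ0 ▸ zero_le, hs.trans_lt (hσ (by omega))⟩
  have hj : j ≤ 2 * J := Nat.lt_succ_iff.1 (Finset.mem_range.1 hj)
  have hsum : ∀ k ≤ J, e k ≤ ∑ k ∈ Finset.range (J + 1), e k := fun k hk =>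
    Finset.single_le_sum (fun _ _ => zero_le) (Finset.mem_range.2 (by omega))
  obtain ⟨k, rfl | rfl⟩ := Nat.even_or_odd' j
  · exact (edist_phiSub_psiSub_le_of_mem_gap a hSσ hS' hσ hfit hl
      (fun i hi => hS'τ i (by omega)) (hZ k (by omega))
      (fun v hv => happrox k (by omega) v (hmτ k (by omega) v hv)) hsj).trans (hsum k (by omega))
  · refine (edist_phiSub_psiSub_le_of_mem_excursion a hSσ hS' hσ hfit hl
      (fun i hi => hS'τ i (by omega)) (fun u hu => happrox (k + 1) (by omega) u ?_) hsj).trans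
      (hsum (k + 1) (by omega))
    refine hu.trans ?_
    simpa [show 2 * (k + 1) = 2 * k + 2 by ring, show 2 * (k + 1) - 1 = 2 * k + 1 by omega]
      using hmσ (k + 1) (by omega)

end Estimate

noncomputable def splice (K : ℕ) (T : ℕ → ℝ≥0∞) (σ : ℕ → ℝ≥0) (j : ℕ) : ℝ≥0 :=
  if j ≤ 2 * K then (T j).toNNReal else σ j

noncomputable def truncate (K : ℕ) (l : ℕ → ℝ≥0 → ℝ≥0) (k : ℕ) : ℝ≥0 → ℝ≥0 :=
  if k ≤ K then l k else id

lemma truncate_of_le {K k : ℕ} (l : ℕ → ℝ≥0 → ℝ≥0) (hk : k ≤ K) : truncate K l k = l k :=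
  if_pos hk

lemma isTimeChange_truncate {l : ℕ → ℝ≥0 → ℝ≥0} (hl : ∀ k, IsTimeChange (l k)) (K k : ℕ) :
    IsTimeChange (truncate K l k) := by
  unfold truncate
  split_ifs
  exacts [hl k, isTimeChange_id]

lemma tendsto_splice {T : ℕ → ℕ → ℝ≥0∞} {σ : ℕ → ℝ≥0}
    (hT : ∀ j, Tendsto (fun n => T n j) atTop (𝓝 (σ j))) (K j : ℕ) :
    Tendsto (fun n => splice K (T n) σ j) atTop (𝓝 (σ j)) := by
  unfold splice
  split_ifs
  · have h := ENNReal.tendsto_toNNReal (ENNReal.coe_ne_top (r := σ j))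
    rw [ENNReal.toNNReal_coe] at h
    exact h.comp (hT j)
  · exact tendsto_const_nhds

section Approximation

variable {σ : ℕ → ℝ≥0} {Sn : ℕ → ℕ → ℝ≥0∞} {l : ℕ → ℕ → ℝ≥0 → ℝ≥0}
  (hσ : StrictMono σ) (hSnσ : ∀ j, Tendsto (fun n => Sn n j) atTop (𝓝 (σ j)))
  (hl : ∀ k n, IsTimeChange (l k n))
  (hld : ∀ k, Tendsto (fun n => ⨆ u, edist (l k n u) u) atTop (𝓝 0))

include hSnσ in
lemma eventually_eq_splice (K : ℕ) : ∀ᶠ n in atTop, ∀ j ≤ 2 * K, Sn n j = splice K (Sn n) σ j := by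
  refine (eventually_all_finite (finite_Iic (2 * K))).2 fun j hj => ?_
  filter_upwards [(hSnσ j).eventually_ne ENNReal.coe_ne_top] with n hn
  simp [splice, show j ≤ 2 * K from hj, ENNReal.coe_toNNReal hn]

include hσ hSnσ hld in
lemma eventually_add_lt_splice (K : ℕ) : ∀ᶠ n in atTop, ∀ k, splice K (Sn n) σ (2 * k - 1) +
    truncate K (l · n) k (σ (2 * k) - σ (2 * k - 1)) < splice K (Sn n) σ (2 * k + 1) := by
  have hlow : ∀ᶠ n in atTop, ∀ k ∈ Iic K, splice K (Sn n) σ (2 * k - 1) +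
      l k n (σ (2 * k) - σ (2 * k - 1)) < splice K (Sn n) σ (2 * k + 1) := by
    refine (eventually_all_finite (finite_Iic K)).2 fun k _ => ?_
    refine ((tendsto_splice hSnσ K _).add (tendsto_apply_of_tendsto_iSup_edist (hld k) _))
      |>.eventually_lt (tendsto_splice hSnσ K _) ?_
    rw [add_tsub_cancel_of_le (hσ.monotone (by omega))]
    exact hσ (by omega)
  filter_upwards [hlow] with n hn k
  by_cases hk : k ≤ K
  · simpa [truncate_of_le _ hk] using hn k hk
  · simp only [truncate, splice, hk, if_false, id,
      show ¬ 2 * k - 1 ≤ 2 * K by omega, show ¬ 2 * k + 1 ≤ 2 * K by omega]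
    rw [add_tsub_cancel_of_le (hσ.monotone (by omega))]
    exact hσ (by omega)

include hSnσ hl hld in
lemma eventually_le_of_lt {m : ℕ → ℝ≥0} (hm : ∀ k, σ (2 * k) - σ (2 * k - 1) + 1 ≤ m k)
    (K : ℕ) : ∀ᶠ n in atTop, ∀ k ≤ K, ∀ v,
      l k n v < splice K (Sn n) σ (2 * k) - splice K (Sn n) σ (2 * k - 1) → v ≤ m k := by
  refine (eventually_all_finite (finite_Iic K)).2 fun k _ => ?_
  filter_upwards [((tendsto_splice hSnσ K _).sub (tendsto_splice hSnσ K _)).eventually_lt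
    (tendsto_apply_of_tendsto_iSup_edist (hld k) _) (lt_add_one _)] with n hn v hv
  exact ((hl k n).1.lt_iff_lt.1 (hv.trans hn)).le.trans (hm k)

include hσ hSnσ hld in
lemma eventually_edist_matchTimeChange_le (hσ0 : σ 0 = 0) (hσt : Tendsto σ atTop atTop)
    (K : ℕ) : ∀ᶠ n in atTop, ∀ t,
      edist (matchTimeChange σ (splice K (Sn n) σ) (truncate K (l · n)) t) t ≤
        ((K + 1 : ℕ) : ℝ≥0∞)⁻¹ := by
  set δ : ℕ → ℝ≥0∞ := fun n => ∑ j ∈ Finset.range (2 * K + 1), edist (splice K (Sn n) σ j) (σ j) +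
    ∑ k ∈ Finset.range (K + 1), ⨆ u, edist (l k n u) u
  have hδ : Tendsto (fun n => 6 * δ n) atTop (𝓝 0) := by
    have : Tendsto δ atTop (𝓝 0) := by
      simpa using (tendsto_finsetSum _ fun j _ =>
        tendsto_iff_edist_tendsto_0.1 (tendsto_splice hSnσ K j)).add
        (tendsto_finsetSum _ fun k _ => hld k)
    simpa using ENNReal.Tendsto.const_mul this (Or.inr ENNReal.ofNat_ne_top)
  have hτδ : ∀ n j, edist (splice K (Sn n) σ j) (σ j) ≤ δ n := fun n j => by
    by_cases hj : j ≤ 2 * K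
    · exact (Finset.single_le_sum (f := fun j => edist (splice K (Sn n) σ j) (σ j))
        (fun _ _ => zero_le) (Finset.mem_range.2 (by omega))).trans le_self_add
    · simp [splice, hj]
  have hlδ : ∀ n k u, edist (truncate K (l · n) k u) u ≤ δ n := fun n k u => by
    by_cases hk : k ≤ K
    · rw [truncate_of_le _ hk]
      exact ((le_iSup (fun u => edist (l k n u) u) u).trans (Finset.single_le_sum
        (f := fun k => ⨆ u, edist (l k n u) u) (fun _ _ => zero_le)
        (Finset.mem_range.2 (by omega)))).trans le_add_self
    · simp [truncate, hk]
  filter_upwards [eventually_add_lt_splice hσ hSnσ hld K, ENNReal.tendsto_nhds_zero.1 hδ _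
    (ENNReal.inv_pos.2 (ENNReal.natCast_ne_top _))] with n hfit hdev t
  exact (edist_matchTimeChange_le hσ hfit hσ0 hσt (hτδ n) (hlδ n) t).trans hdev

include hσ hSnσ hl hld in
theorem eventually_exists_timeChange {V : Type*} [PseudoMetricSpace V] (a : V)
    {S : ℕ → ℝ≥0∞} {f : ℕ → ℝ≥0 → V} {Z : ℕ → ℝ≥0 → V} {m : ℕ → ℝ≥0}
    (hσ0 : σ 0 = 0) (hσt : Tendsto σ atTop atTop) (hSσ : ∀ j, S j = σ j)
    (hSn : ∀ n, Monotone (Sn n)) (hSn0 : ∀ n, Sn n 0 = 0)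
    (hZ : ∀ k v, σ (2 * k) - σ (2 * k - 1) ≤ v → Z k v = a)
    (hm : ∀ k, σ (2 * k) - σ (2 * k - 1) + 1 ≤ m k) (K : ℕ) :
    ∀ᶠ n in atTop, ∃ L, IsTimeChange L ∧ (∀ t, edist (L t) t ≤ ((K + 1 : ℕ) : ℝ≥0∞)⁻¹) ∧
      ∀ J < K, ∀ s ≤ σ (2 * J), edist (PhiSub a (Sn n) (f n) (L s)) (PsiSub a S Z s) ≤
        ∑ k ∈ Finset.range (J + 1),
          ⨆ u : Icc (0 : ℝ≥0) (m k), edist (ESub a (Sn n) (f n) k (l k n u)) (Z k u) := by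
  filter_upwards [eventually_eq_splice hSnσ K, eventually_add_lt_splice hσ hSnσ hld K,
    eventually_le_of_lt hSnσ hl hld hm K, eventually_edist_matchTimeChange_le hσ hSnσ hld hσ0 hσt K]
    with n hfin hfit hmτ hdev
  have hτt : Tendsto (splice K (Sn n) σ) atTop atTop :=
    hσt.congr' ((eventually_gt_atTop (2 * K)).mono fun j hj => by simp [splice, not_le.2 hj])
  refine ⟨_, isTimeChange_matchTimeChange hσ hfit (isTimeChange_truncate (hl · n) K) hσ0 hσt
    (by simp [splice, hSn0]) hτt, hdev, fun J hJ s hs => ?_⟩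
  refine edist_phiSub_psiSub_le a hSσ (hSn n) hσ hfit (isTimeChange_truncate (hl · n) K) hσ0
    (fun j hj => hfin j (by omega)) (fun k _ => hZ k) (fun k hk u hu => ?_)
    (fun k _ => le_self_add.trans (hm k))
    (fun k hk v hv => hmτ k (by omega) v (by rwa [truncate_of_le _ (by omega)] at hv)) hs
  rw [truncate_of_le _ (by omega)]
  exact le_iSup (fun u : Icc (0 : ℝ≥0) (m k) =>
    edist (ESub a (Sn n) (f n) k (l k n u)) (Z k u)) ⟨u, zero_le, hu⟩

end Approximation

end Skorokhod

open Skorokhod in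
theorem statement6_general {V : Type*} [MetricSpace V] (a : V)
    (Sn : ℕ → ℕ → ℝ≥0∞) (S : ℕ → ℝ≥0∞) (f : ℕ → ℝ≥0 → V) (ζ : ℕ → ℝ≥0 → V)
    (hSn : ∀ n, IsSubdivision (Sn n)) (hS : IsSubdivision S)
    (hSstrict : StrictMono S) (hSfin : ∀ k, S k ≠ ⊤)
    (hζ : ∀ k, 1 ≤ k → IsExcursion a (ζ k))
    (hSconv : ∀ k, Filter.Tendsto (fun n => Sn n k) Filter.atTop (nhds (S k)))
    (hEconv : ∀ k, 1 ≤ k →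
      J1Tendsto Filter.atTop (fun n => ESub a (Sn n) (f n) k) (ζ k)) :
    J1Tendsto Filter.atTop (fun n => PhiSub a (Sn n) (f n)) (PsiSub a S ζ) := by
  set σ : ℕ → ℝ≥0 := fun j => (S j).toNNReal
  have hSσ : ∀ j, S j = σ j := fun j => (ENNReal.coe_toNNReal (hSfin j)).symm
  have hσ : StrictMono σ := fun i j h =>
    (ENNReal.toNNReal_lt_toNNReal (hSfin i) (hSfin j)).2 (hSstrict h)
  have hσt : Tendsto σ atTop atTop := hS.tendsto_toNNReal hSfin
  -- `ζ 0` is never used by `Ψ^S`; replacing it by the constant path makes every index alike.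
  set Z := Function.update ζ 0 (fun _ => a)
  have hZ : ∀ k, J1Tendsto atTop (fun n => ESub a (Sn n) (f n) k) (Z k) := fun k => by
    rcases Nat.eq_zero_or_pos k with rfl | hk
    · simpa [Z, eSub_zero] using j1Tendsto_const atTop (fun _ : ℝ≥0 => a)
    · simpa [Z, Function.update_of_ne hk.ne'] using hEconv k hk
  have hZstop : ∀ k v, σ (2 * k) - σ (2 * k - 1) ≤ v → Z k v = a := fun k v hv => by
    rcases Nat.eq_zero_or_pos k with rfl | hk
    · simp [Z]
    rw [show Z k = ζ k from Function.update_of_ne hk.ne' _ _]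
    refine (hζ k hk).eq_of_j1Tendsto_eSub (hEconv k hk) ?_ hv
    rw [ENNReal.coe_sub, ← hSσ, ← hSσ]
    exact ENNReal.Tendsto.sub (hSconv _) (hSconv _) (Or.inl (hSfin _))
  choose l hl hld M hM hMconv using hZ
  choose m hmM hm using fun k => hM k (σ (2 * k) - σ (2 * k - 1) + 1)
  rw [← psiSub_update_zero a ζ (fun _ => a)]
  exact j1Tendsto_of_forall_eventually
    (hσt.comp (tendsto_atTop_mono (fun J => Nat.le_mul_of_pos_left J two_pos) tendsto_id))
    (fun J => by simpa using tendsto_finsetSum _ fun k _ => hMconv k (m k) (hmM k))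
    (eventually_exists_timeChange hσ (fun j => hSσ j ▸ hSconv j) hl hld a
      (by simp [σ, hS.map_zero]) hσt hSσ (fun n => (hSn n).1) (fun n => (hSn n).map_zero) hZstop hm)

/-- limit of the truncation map. `S` is a strict subdivision with
`|S| = +∞` (strictly increasing, never `∞`). -/
theorem statement6 {V : Type*} [MetricSpace V] [PolishSpace V] (a : V)
    (Sn : ℕ → ℕ → ℝ≥0∞) (S : ℕ → ℝ≥0∞) (f : ℕ → ℝ≥0 → V) (ζ : ℕ → ℝ≥0 → V)
    (hSn : ∀ n, IsSubdivision (Sn n)) (hS : IsSubdivision S)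
    (hSstrict : StrictMono S) (hSfin : ∀ k, S k ≠ ⊤)
    (hfc : ∀ n, Cadlag (f n)) (hζ : ∀ k, 1 ≤ k → IsExcursion a (ζ k))
    (hSconv : ∀ k, Filter.Tendsto (fun n => Sn n k) Filter.atTop (nhds (S k)))
    (hEconv : ∀ k, 1 ≤ k →
      J1Tendsto Filter.atTop (fun n => ESub a (Sn n) (f n) k) (ζ k)) :
    J1Tendsto Filter.atTop (fun n => PhiSub a (Sn n) (f n)) (PsiSub a S ζ) :=
  statement6_general a Sn S f ζ hSn hS hSstrict hSfin hζ hSconv hEconv
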